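/- Let ρ : ℝ^d → (0,∞) and B : ℝ^d → ℝ^d be smooth with ∇·B = 0 (i.e. ∂_j B^j = 0). Then for every i ∈ {1,…,d}, and with F(ρ,B) = |B|²/(2ρ), the vector field G_i = −ρ ∂_i(F_ρ(ρ,B)) + ( ∂_j(F_{B^i}(ρ,B)) − ∂_i(F_{B^j}(ρ,B)) ) B^j satisfies G_i = ∂_j( B^i B^j / ρ ); explicitly, ρ ∂_i(B_j/ρ)(B^j/ρ) + ∂_j(B^i/ρ) B^j − ∂_i(B_j/ρ) B^j = ∂_j( B^i B^j / ρ ) pointwise. -/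

import Mathlib

/-! Because `ρ · (B_j/ρ) = B_j`, the first and third terms cancel. What remains is the transport
`B^j ∂_j (B^i/ρ)`, which equals `∂_j (B^i/ρ · B^j)` by the product rule since `∂_j B^j = 0`. -/

noncomputable section

/-- Spatial partial derivative `∂_j f` of a scalar function on `ℝ^d`. -/
def pd {d : ℕ} (j : Fin d) (f : (Fin d → ℝ) → ℝ) (x : Fin d → ℝ) : ℝ :=
  fderiv ℝ f x (Pi.single j 1)

theorem pd_mul {d : ℕ} {j : Fin d} {f g : (Fin d → ℝ) → ℝ} {x : Fin d → ℝ}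
    (hf : DifferentiableAt ℝ f x) (hg : DifferentiableAt ℝ g x) :
    pd j (fun y => f y * g y) x = pd j f x * g x + f x * pd j g x := by
  simp only [pd, fderiv_fun_mul hf hg, add_apply, smul_apply, smul_eq_mul]
  ring

theorem sum_pd_mul {d : ℕ} {u : (Fin d → ℝ) → ℝ} {B : (Fin d → ℝ) → Fin d → ℝ}
    {x : Fin d → ℝ} (hu : DifferentiableAt ℝ u x) (hB : DifferentiableAt ℝ B x) :
    ∑ j, pd j (fun y => u y * B y j) x
      = ∑ j, pd j u x * B x j + u x * ∑ j, pd j (fun y => B y j) x := by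
  simp only [pd_mul hu (differentiableAt_pi.1 hB _), Finset.sum_add_distrib, Finset.mul_sum]

/-- For `F(ρ,B) = |B|²/(2ρ)` (so `F_ρ = −|B|²/(2ρ²)`,
`F_{B^i} = B_i/ρ`), if `ρ > 0`, `B` is smooth with `∇·B = 0`, then the gradient field
`G_i = −ρ∂_i(F_ρ) + (∂_j(F_{B^i}) − ∂_i(F_{B^j}))B^j` equals `∂_j(B^i B^j/ρ)`;
explicitly `ρ ∂_i(B_j/ρ)(B^j/ρ) + ∂_j(B^i/ρ)B^j − ∂_i(B_j/ρ)B^j = ∂_j(B^iB^j/ρ)`. -/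
theorem stmt_6 (d : ℕ) (ρ : (Fin d → ℝ) → ℝ) (B : (Fin d → ℝ) → Fin d → ℝ)
    (hρ : ContDiff ℝ (⊤ : ℕ∞) ρ) (hB : ContDiff ℝ (⊤ : ℕ∞) (fun x => B x))
    (hρpos : ∀ x, 0 < ρ x)
    (hdivB : ∀ x, ∑ j, pd j (fun y => B y j) x = 0) :
    ∀ (x : Fin d → ℝ) (i : Fin d),
      ρ x * ∑ j, pd i (fun y => B y j / ρ y) x * (B x j / ρ x)
        + ∑ j, pd j (fun y => B y i / ρ y) x * B x j
        - ∑ j, pd i (fun y => B y j / ρ y) x * B x j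
      = ∑ j, pd j (fun y => B y i * B y j / ρ y) x := by
  intro x i
  have hρ0 : ρ x ≠ 0 := (hρpos x).ne'
  have hBx : DifferentiableAt ℝ B x := hB.differentiable (by simp) x
  have hρx : DifferentiableAt ℝ ρ x := hρ.differentiable (by simp) x
  have hquot : DifferentiableAt ℝ (fun y => B y i / ρ y) x := by
    fun_prop (disch := exact hρ0)
  have hcancel : ρ x * ∑ j, pd i (fun y => B y j / ρ y) x * (B x j / ρ x)
      = ∑ j, pd i (fun y => B y j / ρ y) x * B x j := by
    rw [Finset.mul_sum]
    exact Finset.sum_congr rfl fun j _ => by field_simp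
  have hdiv : ∑ j, pd j (fun y => B y i * B y j / ρ y) x
      = ∑ j, pd j (fun y => B y i / ρ y) x * B x j := by
    simp only [mul_div_right_comm (B _ i)]
    rw [sum_pd_mul hquot hBx, hdivB x, mul_zero, add_zero]
  rw [hcancel, hdiv, add_sub_cancel_left]

end
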